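/- (Theorem 2) Let S be a finite state space and A an action space, let R : S → A → S → ℝ be a reward function, let γ ∈ ℝ with 0 ≤ γ < 1, let φ : S → ℝ be a potential, and let R̂ be the potential-based shaping of R by φ. Fix M ∈ ℕ, and suppose for each length L ∈ ℕ we are given an expert trajectory τ^L of length L and a family (τ^L_j)_{j=1}^M of trajectories of length L with the same starting state as τ^L. Then the difference of ρ-projections vanishes in the limit: ρ_{τ^L}(R̂) − ρ_{τ^L}(R) → 0 as L → ∞. -/

import Mathlib

/-- The discounted reward of a trajectory `(s, a)` of length `L`:
`R(τ) = ∑_{t=0}^{L-1} γ^t · R(s_t, a_t, s_{t+1})`. -/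
noncomputable def discReward {S A : Type*} (R : S → A → S → ℝ) (γ : ℝ) (L : ℕ)
    (s : Fin (L + 1) → S) (a : Fin L → A) : ℝ :=
  ∑ t : Fin L, γ ^ (t : ℕ) * R (s t.castSucc) (a t) (s t.succ)

/-- The ρ-projection of a reward function `R`, given an expert trajectory `(s, a)` of
length `L` and a family of `M` trajectories `(s' j, a' j)` of length `L`:
`ρ_τ(R) = exp(R(τ)) / (exp(R(τ)) + ∑_{j=1}^M exp(R(τ_j)))`. -/
noncomputable def rhoProj {S A : Type*} (γ : ℝ) (L M : ℕ)
    (s : Fin (L + 1) → S) (a : Fin L → A)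
    (s' : Fin M → Fin (L + 1) → S) (a' : Fin M → Fin L → A)
    (R : S → A → S → ℝ) : ℝ :=
  Real.exp (discReward R γ L s a) /
    (Real.exp (discReward R γ L s a) +
      ∑ j : Fin M, Real.exp (discReward R γ L (s' j) (a' j)))


open Filter Real

/-! Shaping by `φ` changes the discounted reward of a trajectory of length `L` by the telescoping
sum `γ^L φ(s_L) - φ(s_0)`. All trajectories share their starting state, so `-φ(s_0)` cancels in
the ρ-projection; written as `(1 + ∑ⱼ exp (R(τⱼ) - R(τ)))⁻¹`, it then only sees each exponent
moved by at most `2 |γ|^L max |φ|`. A perturbation of size `δ` multiplies the sum by a factor in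
`[exp (-δ), exp δ]`, hence moves `(1 + t)⁻¹` by at most `exp δ - 1`, which tends to `0` with
`|γ|^L`. -/

theorem Fin.sum_univ_succ_sub_castSucc {G : Type*} [AddCommGroup G] :
    ∀ {n : ℕ} (f : Fin (n + 1) → G),
      ∑ i : Fin n, (f i.succ - f i.castSucc) = f (Fin.last n) - f 0
  | 0, f => by simp
  | n + 1, f => by
    have ih := Fin.sum_univ_succ_sub_castSucc (f ∘ Fin.castSucc)
    simp only [Function.comp_apply, Fin.castSucc_zero, ← Fin.succ_castSucc] at ih
    rw [Fin.sum_univ_castSucc, ih, Fin.succ_last]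
    abel

lemma abs_inv_one_add_sub_inv_one_add_le {t t' E : ℝ} (ht : 0 ≤ t) (ht' : 0 ≤ t') (hE : 1 ≤ E)
    (h : t' ≤ E * t) (h' : t ≤ E * t') : |(1 + t')⁻¹ - (1 + t)⁻¹| ≤ E - 1 := by
  rw [inv_sub_inv (by positivity) (by positivity), abs_div,
    abs_of_pos (by positivity : (0 : ℝ) < (1 + t') * (1 + t)), div_le_iff₀ (by positivity), abs_le]
  have hE' : 0 ≤ E - 1 := sub_nonneg.2 hE
  constructor <;>
    nlinarith [mul_nonneg hE' (mul_nonneg ht ht'), mul_nonneg hE' ht, mul_nonneg hE' ht']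

section Softmax

variable {ι : Type*} [Fintype ι]

lemma sum_exp_add_le_exp_mul_sum_exp {u ε : ι → ℝ} {δ : ℝ} (hε : ∀ j, |ε j| ≤ δ) :
    ∑ j, exp (u j + ε j) ≤ exp δ * ∑ j, exp (u j) := by
  rw [Finset.mul_sum]
  gcongr with j
  rw [exp_add, mul_comm]
  gcongr
  exact le_of_abs_le (hε j)

lemma abs_inv_one_add_sum_exp_add_sub_le {u ε : ι → ℝ} {δ : ℝ} (hδ : 0 ≤ δ)
    (hε : ∀ j, |ε j| ≤ δ) :
    |(1 + ∑ j, exp (u j + ε j))⁻¹ - (1 + ∑ j, exp (u j))⁻¹| ≤ exp δ - 1 := by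
  refine abs_inv_one_add_sub_inv_one_add_le (by positivity) (by positivity) (one_le_exp hδ)
    (sum_exp_add_le_exp_mul_sum_exp hε) ?_
  simpa using sum_exp_add_le_exp_mul_sum_exp (u := fun j => u j + ε j) (ε := fun j => -ε j)
    (by simpa using hε)

lemma exp_div_exp_add_sum_exp (x : ℝ) (y : ι → ℝ) :
    exp x / (exp x + ∑ j, exp (y j)) = (1 + ∑ j, exp (y j - x))⁻¹ := by
  simp only [exp_sub, ← Finset.sum_div]
  field_simp

end Softmax

section Trajectory

variable {S A : Type*}

lemma discReward_shaped (R : S → A → S → ℝ) (γ : ℝ) (φ : S → ℝ) (L : ℕ)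
    (s : Fin (L + 1) → S) (a : Fin L → A) :
    discReward (fun x y z => R x y z + γ * φ z - φ x) γ L s a
      = discReward R γ L s a + (γ ^ L * φ (s (Fin.last L)) - φ (s 0)) := by
  have h := Fin.sum_univ_succ_sub_castSucc fun t : Fin (L + 1) => γ ^ (t : ℕ) * φ (s t)
  simp only [Fin.val_succ, Fin.val_castSucc, Fin.val_last, Fin.val_zero, pow_zero,
    one_mul] at h
  rw [discReward, discReward, ← h, ← Finset.sum_add_distrib]
  congr 1 with t
  ring

lemma rhoProj_eq_inv_one_add (γ : ℝ) (L M : ℕ) (s : Fin (L + 1) → S) (a : Fin L → A)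
    (s' : Fin M → Fin (L + 1) → S) (a' : Fin M → Fin L → A) (R : S → A → S → ℝ) :
    rhoProj γ L M s a s' a' R =
      (1 + ∑ j, exp (discReward R γ L (s' j) (a' j) - discReward R γ L s a))⁻¹ :=
  exp_div_exp_add_sum_exp _ _

lemma rhoProj_shaped_eq_inv_one_add (R : S → A → S → ℝ) (γ : ℝ) (φ : S → ℝ) (L M : ℕ)
    (s : Fin (L + 1) → S) (a : Fin L → A)
    (s' : Fin M → Fin (L + 1) → S) (a' : Fin M → Fin L → A) (hstart : ∀ j, s' j 0 = s 0) :
    rhoProj γ L M s a s' a' (fun x y z => R x y z + γ * φ z - φ x) =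
      (1 + ∑ j, exp ((discReward R γ L (s' j) (a' j) - discReward R γ L s a) +
        γ ^ L * (φ (s' j (Fin.last L)) - φ (s (Fin.last L)))))⁻¹ := by
  rw [rhoProj_eq_inv_one_add]
  simp only [discReward_shaped, hstart]
  congr 3 with j
  ring_nf

lemma abs_rhoProj_shaped_sub_le (R : S → A → S → ℝ) (γ : ℝ) (φ : S → ℝ) {C : ℝ}
    (hC : ∀ z, |φ z| ≤ C) (L M : ℕ) (s : Fin (L + 1) → S) (a : Fin L → A)
    (s' : Fin M → Fin (L + 1) → S) (a' : Fin M → Fin L → A) (hstart : ∀ j, s' j 0 = s 0) :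
    |rhoProj γ L M s a s' a' (fun x y z => R x y z + γ * φ z - φ x) -
        rhoProj γ L M s a s' a' R| ≤ exp (|γ| ^ L * (2 * C)) - 1 := by
  rw [rhoProj_shaped_eq_inv_one_add R γ φ L M s a s' a' hstart, rhoProj_eq_inv_one_add]
  have hC0 : 0 ≤ C := (abs_nonneg _).trans (hC (s 0))
  refine abs_inv_one_add_sum_exp_add_sub_le (by positivity) fun j => ?_
  rw [abs_mul, abs_pow]
  gcongr
  exact (abs_sub _ _).trans (by linarith [hC (s' j (Fin.last L)), hC (s (Fin.last L))])

end Trajectory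

/-- Theorem 2: With a finite state space `S`, discount `0 ≤ γ < 1`, and for
each length `L` an expert trajectory of length `L` together with a family of `M`
trajectories of length `L` sharing its starting state, the difference between the
ρ-projection of the potential-based shaped reward `R̂` and that of `R` tends to `0` as
`L → ∞`. -/
theorem rhoProj_shaped_sub_tendsto_zero {S A : Type*} [Fintype S]
    (R : S → A → S → ℝ) (γ : ℝ) (hγ0 : 0 ≤ γ) (hγ1 : γ < 1) (φ : S → ℝ) (M : ℕ)
    (s : (L : ℕ) → Fin (L + 1) → S) (a : (L : ℕ) → Fin L → A)
    (s' : (L : ℕ) → Fin M → Fin (L + 1) → S) (a' : (L : ℕ) → Fin M → Fin L → A)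
    (hstart : ∀ (L : ℕ) (j : Fin M), s' L j 0 = s L 0) :
    Tendsto (fun L : ℕ =>
        rhoProj γ L M (s L) (a L) (s' L) (a' L) (fun x y z => R x y z + γ * φ z - φ x) -
          rhoProj γ L M (s L) (a L) (s' L) (a' L) R)
      atTop (nhds 0) := by
  obtain ⟨C, hC⟩ := (Set.finite_range fun z => |φ z|).bddAbove
  have hpow : Tendsto (fun L : ℕ => |γ| ^ L) atTop (nhds 0) :=
    tendsto_pow_atTop_nhds_zero_of_lt_one (abs_nonneg γ) (abs_lt.2 ⟨by linarith, hγ1⟩)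
  have hbound : Tendsto (fun L : ℕ => exp (|γ| ^ L * (2 * C)) - 1) atTop (nhds 0) := by
    have hexp := ((continuous_exp.comp (continuous_mul_const (2 * C))).tendsto 0).comp hpow
    simpa using hexp.sub_const 1
  exact squeeze_zero_norm
    (fun L => abs_rhoProj_shaped_sub_le R γ φ (fun z => hC ⟨z, rfl⟩) L M _ _ _ _ (hstart L))
    hbound
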